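/- Let Γ be a biangle, i.e. the graph with two vertices v, w joined by exactly two edges, let α be an axial function on Γ with values in ℤ^m modulo sign, and consider any quaternionic structure on (Γ, α). If α̃(e), α̃(f) ∈ ℤ^m are quaternionically compatible lifts at v of the labels of the two edges (so that α̃(e) + α̃(f) is a lift of λ(v)), then the quaternionic weight at w is λ(w) = ±(α̃(f) − α̃(e)). -/

import Mathlib

namespace GKMQ

/-- `x` equals `y` up to sign (`x` is a "lift" of the class of `y` mod sign). -/
def PM {m : ℕ} (x y : Fin m → ℤ) : Prop := x = y ∨ x = -y

/-- coefficientwise coercion of an integer vector to `ℚ`. -/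
def ratQ {m : ℕ} (x : Fin m → ℤ) : Fin m → ℚ := fun i => (x i : ℚ)

/-- An abstract graph: finite vertex and oriented-edge sets, a fixed-point-free
orientation-reversal involution `bar`, no loops; multiple edges are allowed. -/
structure Graph where
  V : Type
  E : Type
  fintypeV : Fintype V
  fintypeE : Fintype E
  src : E → V
  bar : E → E
  bar_invol : ∀ e, bar (bar e) = e
  bar_ne : ∀ e, bar e ≠ e
  no_loop : ∀ e, src (bar e) ≠ src e

/-- The terminal vertex of an oriented edge. -/
def Graph.tgt (G : Graph) (e : G.E) : G.V := G.src (G.bar e)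

/-- A connection on a graph; `map e` is a bijection `E_{i(e)} → E_{t(e)}` with
`∇_e e = ē` and `∇_{ē} = (∇_e)⁻¹` (its values outside `E_{i(e)}` are irrelevant). -/
structure Connection (G : Graph) where
  map : G.E → G.E → G.E
  map_src : ∀ e f, G.src f = G.src e → G.src (map e f) = G.tgt e
  map_self : ∀ e, map e e = G.bar e
  map_bar : ∀ e f, G.src f = G.src e → map (G.bar e) (map e f) = f

/-- Compatibility of a connection with an edge labeling (mod sign): for every edge `e`
and `f ∈ E_{i(e)}` there are lifts of the labels of `f` and `∇_e f` differing by an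
integer multiple of the label of `e`. -/
def CompatibleConn (G : Graph) {m : ℕ} (label : G.E → (Fin m → ℤ)) (C : Connection G) :
    Prop :=
  ∀ e f, G.src f = G.src e →
    ∃ x y : Fin m → ℤ, PM x (label f) ∧ PM y (label (C.map e f)) ∧
      ∃ c : ℤ, y = x + c • label e

/-- An axial function with values in `ℤ^m` modulo sign; `label` is a choice of
representatives, so that all labels are well defined up to sign. -/
structure Axial (G : Graph) (m : ℕ) where
  label : G.E → (Fin m → ℤ)
  label_bar : ∀ e, PM (label (G.bar e)) (label e)
  indep₂ : ∀ e f, G.src f = G.src e → e ≠ f →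
    LinearIndependent ℚ ![ratQ (label e), ratQ (label f)]
  exists_compat : ∃ C : Connection G, CompatibleConn G label C

/-- The GKM_k condition: at every vertex, any `k` of the labels are linearly
independent over `ℚ`. -/
def Axial.IsGKM {G : Graph} {m : ℕ} (A : Axial G m) (k : ℕ) : Prop :=
  ∀ v : G.V, ∀ s : Finset G.E, (∀ e ∈ s, G.src e = v) → s.card = k →
    LinearIndependent ℚ (fun e : {x // x ∈ s} => ratQ (A.label e.1))

/-- A full quaternionically compatible family of lifts at a vertex `v`: `L` assigns to
every edge at `v` a lift of its label, `ℓ` is a lift of the quaternionic weight, and the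
lifts of each quaternionic pair sum to `ℓ`. -/
def QFam (G : Graph) {m : ℕ} (label : G.E → (Fin m → ℤ)) (lam : G.V → (Fin m → ℤ))
    (qpair : G.E → G.E) (v : G.V) (L : G.E → (Fin m → ℤ)) (ℓ : Fin m → ℤ) : Prop :=
  PM ℓ (lam v) ∧ ∀ e, G.src e = v → PM (L e) (label e) ∧ L e + L (qpair e) = ℓ

/-- A partial family `s` of lifts, together with a lift `ℓ` of the quaternionic weight
at `v`, is quaternionically compatible if it extends to a full family. -/
def QCompat (G : Graph) {m : ℕ} (label : G.E → (Fin m → ℤ)) (lam : G.V → (Fin m → ℤ))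
    (qpair : G.E → G.E) (v : G.V) (s : List (G.E × (Fin m → ℤ))) (ℓ : Fin m → ℤ) :
    Prop :=
  ∃ L, QFam G label lam qpair v L ℓ ∧ ∀ p ∈ s, L p.1 = p.2

/-- Condition (2) in the definition of a quaternionic structure on a GKM graph. -/
def QuatCondTwo (G : Graph) {m : ℕ} (label : G.E → (Fin m → ℤ))
    (lam : G.V → (Fin m → ℤ)) (qpair : G.E → G.E) : Prop :=
  ∃ C : Connection G, CompatibleConn G label C ∧
    (∀ e f, G.src f = G.src e → C.map e (qpair f) = qpair (C.map e f)) ∧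
    ∀ e xe lv, QCompat G label lam qpair (G.src e) [(e, xe)] lv →
      ∃ lw, (∃ c : ℤ, lw = lv + c • label e) ∧
        QCompat G label lam qpair (G.tgt e) [(G.bar e, -xe)] lw ∧
        ∀ f, G.src f = G.src e → ∀ xf,
          QCompat G label lam qpair (G.src e) [(e, xe), (f, xf)] lv →
          ∀ y, PM y (label (C.map e f)) → (∃ c : ℤ, y = xf + c • label e) →
            QCompat G label lam qpair (G.tgt e) [(G.bar e, -xe), (C.map e f, y)] lw

/-- A quaternionic structure on an abstract GKM graph: a quaternionic weight (mod sign)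
at every vertex, and a grouping of the edges at each vertex into quaternionic pairs,
subject to conditions (1) (`pair_sum`) and (2) (`cond₂`). -/
structure QuatStructure (G : Graph) {m : ℕ} (A : Axial G m) where
  lam : G.V → (Fin m → ℤ)
  qpair : G.E → G.E
  qpair_src : ∀ e, G.src (qpair e) = G.src e
  qpair_ne : ∀ e, qpair e ≠ e
  qpair_invol : ∀ e, qpair (qpair e) = e
  pair_sum : ∀ e, ∃ x y : Fin m → ℤ, PM x (A.label e) ∧ PM y (A.label (qpair e)) ∧
    PM (x + y) (lam (G.src e))
  cond₂ : QuatCondTwo G A.label lam qpair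

/-- Auxiliary function: consecutive pairs of edges of a connection path. -/
def connAux (G : Graph) (C : Connection G) (e₁ e₂ : G.E) : ℕ → G.E × G.E
  | 0 => (e₁, e₂)
  | n + 1 =>
    let p := connAux G C e₁ e₂ n
    (p.2, C.map p.2 (G.bar p.1))

/-- The connection path with prescribed first two edges `e₁, e₂` (where `t(e₁) = i(e₂)`):
`g 0 = e₁`, `g 1 = e₂`, `g (k+2) = ∇_{g (k+1)} (bar (g k))`. -/
def connPathFrom (G : Graph) (C : Connection G) (e₁ e₂ : G.E) (k : ℕ) : G.E :=
  (connAux G C e₁ e₂ k).1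

/-- The connection path through two edges `e, f` starting at the same vertex:
`g 0 = e`, `g 1 = ∇_e f`, `g (k+2) = ∇_{g (k+1)} (bar (g k))`. -/
def connPath (G : Graph) (C : Connection G) (e f : G.E) : ℕ → G.E :=
  connPathFrom G C e (C.map e f)

def IsPeriod {α : Type*} (g : ℕ → α) (N : ℕ) : Prop := 0 < N ∧ ∀ k, g (k + N) = g k

/-- `N` is the minimal period of the sequence `g`. -/
def MinPeriod {α : Type*} (g : ℕ → α) (N : ℕ) : Prop :=
  IsPeriod g N ∧ ∀ N', IsPeriod g N' → N ≤ N'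

/-- A 2-face (given by its connection path `g`) is quaternionic if at each of its
vertices the two edges of the face based there form a quaternionic pair. -/
def IsQuatPath (G : Graph) {m : ℕ} {A : Axial G m} (Q : QuatStructure G A)
    (g : ℕ → G.E) : Prop :=
  ∀ k, Q.qpair (g (k + 1)) = G.bar (g k)

/-- A noncomplex triangle: a quaternionic 2-face which is a triangle with labels
`±a, ±λ, ±(λ-a)` and quaternionic weights `±λ, ±(λ-a), ±a` at its three vertices. -/
def IsNoncomplexTriangle (G : Graph) {m : ℕ} {A : Axial G m} (Q : QuatStructure G A)
    (g : ℕ → G.E) : Prop :=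
  MinPeriod g 3 ∧ IsQuatPath G Q g ∧
  ∃ a l : Fin m → ℤ,
    PM (A.label (g 0)) a ∧ PM (A.label (g 1)) l ∧ PM (A.label (g 2)) (l - a) ∧
    PM (Q.lam (G.src (g 0))) l ∧ PM (Q.lam (G.src (g 1))) (l - a) ∧
    PM (Q.lam (G.src (g 2))) a

/-- Hypothesis (H): a GKM₃ graph with quaternionic structure all of whose quaternionic
2-faces are biangles or noncomplex triangles and all of whose complex 2-faces are
triangles or quadrangles. -/
def HypH (G : Graph) {m : ℕ} (A : Axial G m) (Q : QuatStructure G A) : Prop :=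
  A.IsGKM 3 ∧
  ∀ C : Connection G, CompatibleConn G A.label C →
    ∀ e f, G.src f = G.src e → f ≠ e →
      ∀ N, MinPeriod (connPath G C e f) N →
        (IsQuatPath G Q (connPath G C e f) →
          N = 2 ∨ IsNoncomplexTriangle G Q (connPath G C e f)) ∧
        (¬ IsQuatPath G Q (connPath G C e f) → N = 3 ∨ N = 4)

/-- A compatible signed structure on a 2-face with edges `g 0, …, g (N-1)`
(indices mod `N`): lifts `γ k` of the labels `α (g k)` such that consecutive lifts
satisfy the connection congruence and are quaternionically compatible at each vertex. -/
def SignedStructureOn (G : Graph) {m : ℕ} (A : Axial G m) (Q : QuatStructure G A)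
    (g : ℕ → G.E) (N : ℕ) (γ : ℕ → (Fin m → ℤ)) : Prop :=
  (∀ k, γ (k + N) = γ k) ∧
  (∀ k, PM (γ k) (A.label (g k))) ∧
  (∀ k, ∃ c : ℤ, γ (k + 2) + γ k = c • γ (k + 1)) ∧
  (∀ k, ∃ ℓ, QCompat G A.label Q.lam Q.qpair (G.tgt (g k))
      [(G.bar (g k), -(γ k)), (g (k + 1), γ (k + 1))] ℓ)

/-- The raw data of a GKM graph with quaternionic structure: vertices, oriented edges,
labels, quaternionic weights (both as chosen representatives mod sign) and quaternionic
pairs. -/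
structure QData (m : ℕ) where
  V : Type
  E : Type
  src : E → V
  bar : E → E
  label : E → (Fin m → ℤ)
  lam : V → (Fin m → ℤ)
  qpair : E → E

/-- The quaternionic GKM data underlying a GKM graph with quaternionic structure. -/
def toQData (G : Graph) {m : ℕ} (A : Axial G m) (Q : QuatStructure G A) : QData m :=
  ⟨G.V, G.E, G.src, G.bar, A.label, Q.lam, Q.qpair⟩

/-- An isomorphism of GKM graphs with quaternionic structure: bijections of vertices and
oriented edges commuting with `src`, `bar` and the quaternionic pairing, and preserving
the labels and the quaternionic weights up to sign. -/
structure QIso {m : ℕ} (D₁ D₂ : QData m) where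
  vmap : D₁.V ≃ D₂.V
  emap : D₁.E ≃ D₂.E
  src_comm : ∀ e, D₂.src (emap e) = vmap (D₁.src e)
  bar_comm : ∀ e, D₂.bar (emap e) = emap (D₁.bar e)
  label_pm : ∀ e, PM (D₂.label (emap e)) (D₁.label e)
  lam_pm : ∀ v, PM (D₂.lam (vmap v)) (D₁.lam v)
  qpair_comm : ∀ e, D₂.qpair (emap e) = emap (D₁.qpair e)

/-- The model graph `Γ_{ℍP}(λ; β₀, …, β_n)` of a torus action on `ℍPⁿ`: vertices
`0, …, n`, two edges between any two distinct vertices `k, l`, labeled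
`±(β_k - β_l)` and `±(λ - β_k - β_l)`, quaternionic weight `±(λ - 2β_k)` at `k`,
the two edges of each biangle forming a quaternionic pair. -/
def modelHP (n : ℕ) {m : ℕ} (lam₀ : Fin m → ℤ) (β : Fin (n + 1) → (Fin m → ℤ)) :
    QData m where
  V := Fin (n + 1)
  E := {p : Fin (n + 1) × Fin (n + 1) // p.1 ≠ p.2} × Bool
  src e := e.1.1.1
  bar e := (⟨(e.1.1.2, e.1.1.1), Ne.symm e.1.2⟩, e.2)
  label e := if e.2 then lam₀ - β e.1.1.1 - β e.1.1.2 else β e.1.1.1 - β e.1.1.2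
  lam k := lam₀ - (2 : ℤ) • β k
  qpair e := (e.1, !e.2)

/-- The 2-element subset `{i, j}` (`i ≠ j`) realized as a sorted pair. -/
def uPair {n : ℕ} (i j : Fin n) (h : i ≠ j) : {p : Fin n × Fin n // p.1 < p.2} :=
  if hlt : i < j then ⟨(i, j), hlt⟩ else ⟨(j, i), (lt_or_gt_of_ne h).resolve_left hlt⟩

/-- The model graph `Γ_{Gr}(β₁, …, β_n)` of a torus action on `Gr₂(ℂⁿ)`: vertices the
2-element subsets of `{1, …, n}`; an oriented edge `(i, j, k)` from `{i, j}` to `{i, k}`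
for `j ≠ k`, labeled `±(β_j - β_k)`; quaternionic weight `±(β_i - β_j)` at `{i, j}`;
the edges `(i, j, k)` and `(j, i, k)` forming a quaternionic pair at `{i, j}`. -/
def modelGr (n : ℕ) {m : ℕ} (β : Fin n → (Fin m → ℤ)) : QData m where
  V := {p : Fin n × Fin n // p.1 < p.2}
  E := {t : Fin n × Fin n × Fin n // t.1 ≠ t.2.1 ∧ t.1 ≠ t.2.2 ∧ t.2.1 ≠ t.2.2}
  src e := uPair e.1.1 e.1.2.1 e.2.1
  bar e := ⟨(e.1.1, e.1.2.2, e.1.2.1), e.2.2.1, e.2.1, Ne.symm e.2.2.2⟩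
  label e := β e.1.2.1 - β e.1.2.2
  lam v := β v.1.1 - β v.1.2
  qpair e := ⟨(e.1.2.1, e.1.1, e.1.2.2), Ne.symm e.2.1, e.2.2.2, e.2.2.1⟩

/-- A subgraph (with quaternionic structure) of a GKM graph with quaternionic
structure: sets of vertices and of oriented edges closed under `src`, `bar` and the
quaternionic pairing. -/
structure SubData (G : Graph) {m : ℕ} (A : Axial G m) (Q : QuatStructure G A) where
  W : Set G.V
  F : Set G.E
  src_mem : ∀ e ∈ F, G.src e ∈ W
  bar_mem : ∀ e ∈ F, G.bar e ∈ F
  qpair_mem : ∀ e ∈ F, Q.qpair e ∈ F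

/-- The quaternionic GKM data induced on a subgraph. -/
def SubData.toQData {G : Graph} {m : ℕ} {A : Axial G m} {Q : QuatStructure G A}
    (S : SubData G A Q) : QData m where
  V := S.W
  E := S.F
  src e := ⟨G.src e.1, S.src_mem e.1 e.2⟩
  bar e := ⟨G.bar e.1, S.bar_mem e.1 e.2⟩
  label e := A.label e.1
  lam v := Q.lam v.1
  qpair e := ⟨Q.qpair e.1, S.qpair_mem e.1 e.2⟩

/-!
Transporting the compatible lifts `x, y` (weight lift `x + y`) at `v` along `e` by condition
(2) gives a compatible family at `w` containing `-x` and a lift `z = ±y` of the label of `f̄`,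
with `-x + z ≡ x + y` modulo `α(e)`. The sign `z = -y` would make `2 (x + y)` a multiple of
`α(e)`, contradicting the independence of `α(e)` and `α(f)`; hence `λ(w) = ±(y - x)`.
-/

namespace PM

variable {m : ℕ} {a b c : Fin m → ℤ}

theorem symm (h : PM a b) : PM b a := by
  rcases h with rfl | rfl <;> simp [PM]

theorem trans (h₁ : PM a b) (h₂ : PM b c) : PM a c := by
  rcases h₁ with rfl | rfl <;> rcases h₂ with rfl | rfl <;> simp [PM]

theorem exists_unit_smul_eq (h : PM a b) : ∃ s : ℤ, IsUnit s ∧ a = s • b := by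
  rcases h with h | h
  · exact ⟨1, isUnit_one, by rw [h, one_smul]⟩
  · exact ⟨-1, isUnit_one.neg, by rw [h, neg_one_smul]⟩

end PM

theorem smul_add_smul_ne_zero_of_linearIndependent {m : ℕ} {a b : Fin m → ℤ}
    (h : LinearIndependent ℚ ![ratQ a, ratQ b]) (s : ℤ) {t : ℤ} (ht : t ≠ 0) :
    s • a + t • b ≠ 0 := by
  intro hzero
  have hQ : (s : ℚ) • ratQ a + (t : ℚ) • ratQ b = 0 := by
    funext i
    simpa [ratQ] using congrArg (fun z : Fin m → ℤ => (z i : ℚ)) hzero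
  exact ht (by exact_mod_cast (LinearIndependent.pair_iff.mp h _ _ hQ).2)

theorem Graph.eq_or_eq_of_src_eq_of_biangle (G : Graph) {v w : G.V} (hvw : v ≠ w)
    {e f : G.E} (hte : G.tgt e = w) (htf : G.tgt f = w)
    (hE : ∀ h : G.E, h = e ∨ h = f ∨ h = G.bar e ∨ h = G.bar f)
    (g : G.E) (hg : G.src g = v) : g = e ∨ g = f := by
  rcases hE g with rfl | rfl | rfl | rfl
  · exact Or.inl rfl
  · exact Or.inr rfl
  · exact absurd (hg.symm.trans hte) hvw
  · exact absurd (hg.symm.trans htf) hvw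

namespace QuatStructure

variable {G : Graph} {m : ℕ} {A : Axial G m} (Q : QuatStructure G A)

theorem qpair_eq_of_edges_at {e f : G.E}
    (hedges : ∀ g, G.src g = G.src e → g = e ∨ g = f) : Q.qpair e = f :=
  (hedges _ (Q.qpair_src e)).resolve_left (Q.qpair_ne e)

theorem qcompat_of_edges_at {e f : G.E} (hef : e ≠ f)
    (hedges : ∀ g, G.src g = G.src e → g = e ∨ g = f) {x y : Fin m → ℤ}
    (hx : PM x (A.label e)) (hy : PM y (A.label f)) (hsum : PM (x + y) (Q.lam (G.src e))) :
    QCompat G A.label Q.lam Q.qpair (G.src e) [(e, x)] (x + y) := by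
  classical
  have hqe : Q.qpair e = f := Q.qpair_eq_of_edges_at hedges
  have hqf : Q.qpair f = e := by rw [← hqe, Q.qpair_invol]
  refine ⟨fun g => if g = e then x else y, ⟨hsum, fun g hg => ?_⟩, by simp⟩
  rcases hedges g hg with rfl | rfl
  · simpa [hqe, hef.symm] using hx
  · simpa [hqf, hef.symm, add_comm] using hy

end QuatStructure

theorem QCompat.exists_pair_lift {G : Graph} {m : ℕ} {A : Axial G m}
    {Q : QuatStructure G A} {e : G.E} {x ℓ : Fin m → ℤ}
    (h : QCompat G A.label Q.lam Q.qpair (G.src e) [(e, x)] ℓ) :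
    PM ℓ (Q.lam (G.src e)) ∧ ∃ z, PM z (A.label (Q.qpair e)) ∧ x + z = ℓ := by
  obtain ⟨L, ⟨hℓ, hL⟩, hxe⟩ := h
  have hLe : L e = x := hxe (e, x) (List.mem_singleton_self _)
  exact ⟨hℓ, L (Q.qpair e), (hL _ (Q.qpair_src e)).1, hLe ▸ (hL e rfl).2⟩

theorem neg_add_ne_add_add_smul_of_linearIndependent {m : ℕ} {a b x y : Fin m → ℤ}
    (h : LinearIndependent ℚ ![ratQ a, ratQ b]) (hx : PM x a) (hy : PM y b) (c : ℤ) :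
    -(x + y) ≠ x + y + c • a := by
  obtain ⟨s, -, rfl⟩ := hx.exists_unit_smul_eq
  obtain ⟨t, ht, rfl⟩ := hy.exists_unit_smul_eq
  intro heq
  refine smul_add_smul_ne_zero_of_linearIndependent h (2 * s + c) (t := 2 * t)
    (mul_ne_zero two_ne_zero ht.ne_zero) ?_
  linear_combination (norm := module) -heq

theorem biangle_quaternionic_weight_general (G : Graph) {m : ℕ} (A : Axial G m)
    (Q : QuatStructure G A)
    (v w : G.V) (hvw : v ≠ w) (e f : G.E)
    (he : G.src e = v) (hf : G.src f = v) (hef : e ≠ f)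
    (hte : G.tgt e = w) (htf : G.tgt f = w)
    (hE : ∀ h : G.E, h = e ∨ h = f ∨ h = G.bar e ∨ h = G.bar f)
    (x y : Fin m → ℤ)
    (hx : PM x (A.label e)) (hy : PM y (A.label f)) (hsum : PM (x + y) (Q.lam v)) :
    PM (Q.lam w) (y - x) := by
  subst he hte
  have hv := G.eq_or_eq_of_src_eq_of_biangle hvw rfl htf hE
  have hw : ∀ g, G.src g = G.tgt e → g = G.bar e ∨ g = G.bar f :=
    G.eq_or_eq_of_src_eq_of_biangle (e := G.bar e) (f := G.bar f) hvw.symm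
      (by rw [Graph.tgt, G.bar_invol]) (by rw [Graph.tgt, G.bar_invol, hf])
      (fun g => by simp only [G.bar_invol]; rcases hE g with h | h | h | h <;> simp [h])
  obtain ⟨C, -, -, htransport⟩ := Q.cond₂
  obtain ⟨lw, ⟨c, hc⟩, hQw, -⟩ :=
    htransport e x (x + y) (Q.qcompat_of_edges_at hef hv hx hy hsum)
  obtain ⟨hlw, z, hz, hxz⟩ := hQw.exists_pair_lift
  rw [Q.qpair_eq_of_edges_at hw] at hz
  rcases (hz.trans (A.label_bar f)).trans hy.symm with rfl | rfl
  · rw [← hxz, neg_add_eq_sub] at hlw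
    exact hlw.symm
  · have hcongr : -(x + y) = x + y + c • A.label e := by rw [← hc, ← hxz, neg_add]
    exact absurd hcongr
      (neg_add_ne_add_add_smul_of_linearIndependent (A.indep₂ e f hf hef) hx hy c)

/-- On a biangle with a quaternionic structure, quaternionically compatible lifts
`x, y` at one vertex determine the quaternionic weight at the other vertex as
`±(y - x)`. -/
theorem biangle_quaternionic_weight (G : Graph) {m : ℕ} (A : Axial G m)
    (Q : QuatStructure G A)
    (v w : G.V) (hvw : v ≠ w) (e f : G.E)
    (he : G.src e = v) (hf : G.src f = v) (hef : e ≠ f)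
    (hte : G.tgt e = w) (htf : G.tgt f = w)
    (hV : ∀ u : G.V, u = v ∨ u = w)
    (hE : ∀ h : G.E, h = e ∨ h = f ∨ h = G.bar e ∨ h = G.bar f)
    (x y : Fin m → ℤ)
    (hx : PM x (A.label e)) (hy : PM y (A.label f)) (hsum : PM (x + y) (Q.lam v)) :
    PM (Q.lam w) (y - x) :=
  biangle_quaternionic_weight_general G A Q v w hvw e f he hf hef hte htf hE x y hx hy hsum

end GKMQ
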